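/- arXiv:1907.05824 — 2 statements merged into one kernel-verified Lean document; each statement's English description precedes it below -/
import Mathlib

section
/- For words x and y in the alphabet of positive integers, u_x(λ) = u_y(λ) for every partition λ if and only if w(x) = w(y) and α(x) = α(y), where w_i counts occurrences of the letter i and α_i(x) = max over suffixes x̃ of x of (w_{i+1}(x̃) − w_i(x̃)). -/
/-- A partition, represented by its column lengths (the conjugate):
`c i` is the number of boxes in column `i`. -/
def IsPartition (c : ℕ+ → ℕ) : Prop :=
  (∀ i : ℕ+, c (i + 1) ≤ c i) ∧ ∃ N : ℕ+, ∀ i : ℕ+, N ≤ i → c i = 0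

open Classical in
/-- The Schur operator `u_i`: add a box to column `i` if the result is a
partition, else `none` (representing `0`). -/
noncomputable def addBox (i : ℕ+) (c : ℕ+ → ℕ) : Option (ℕ+ → ℕ) :=
  if IsPartition (Function.update c i (c i + 1)) then
    some (Function.update c i (c i + 1))
  else none

/-- `u_x = u_{x_1} ∘ ⋯ ∘ u_{x_l}` for a word `x = x_1 ⋯ x_l`. -/
noncomputable def schurWord (x : List ℕ+) (c : ℕ+ → ℕ) : Option (ℕ+ → ℕ) :=
  x.foldr (fun i o => o.bind (addBox i)) (some c)

/-- `α_i(x)`: the maximum over suffixes `s` of `x` of `w_{i+1}(s) - w_i(s)`. -/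
def alpha (i : ℕ+) (x : List ℕ+) : ℕ :=
  (x.tails.map (fun s => s.count (i + 1) - s.count i)).foldr max 0

/-! Adding the letters of `x` one at a time, `u_x(λ)` is nonzero exactly when every gap
`λ'_j - λ'_{j+1}` between consecutive columns is at least `α_j(x)`, and then `u_x(λ)` is `λ` with
`w_i(x)` boxes added to column `i`: after the letters of a suffix `s` have been added, column
`j + 1` has grown by `w_{j+1}(s) - w_j(s)` more than column `j`. Hence `w` and `α` determine `u_x`.
Conversely, the partition whose gaps are exactly `α(y)` is admissible for `y`; if `u_x = u_y` it is
admissible for `x` too, which gives `α(x) ≤ α(y)` and `w(x) = w(y)`. -/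

def HasGapsAtLeast (c g : ℕ+ → ℕ) : Prop :=
  ∀ j : ℕ+, g j + c (j + 1) ≤ c j

lemma exists_count_eq_zero (x : List ℕ+) : ∃ N : ℕ+, ∀ j : ℕ+, N ≤ j → x.count j = 0 := by
  obtain ⟨M, hM⟩ := x.toFinset.bddAbove
  refine ⟨M + 1, fun j hj => List.count_eq_zero.mpr fun hjx => ?_⟩
  exact (PNat.lt_add_right M 1).not_ge (hj.trans (hM (List.mem_toFinset.mpr hjx)))

lemma alpha_nil (i : ℕ+) : alpha i [] = 0 := by simp [alpha]

lemma alpha_cons (i a : ℕ+) (x : List ℕ+) :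
    alpha i (a :: x) = max ((a :: x).count (i + 1) - (a :: x).count i) (alpha i x) := by
  simp [alpha]

lemma alpha_le_count_succ (i : ℕ+) (x : List ℕ+) : alpha i x ≤ x.count (i + 1) := by
  induction x with
  | nil => simp [alpha_nil]
  | cons a x ih =>
    rw [alpha_cons]
    exact max_le (Nat.sub_le _ _) (ih.trans List.count_le_count_cons)

lemma exists_isPartition_gaps (g : ℕ+ → ℕ) (N : ℕ+) (hg : ∀ j : ℕ+, N ≤ j → g j = 0) :
    ∃ c : ℕ+ → ℕ, IsPartition c ∧ ∀ j : ℕ+, c j = g j + c (j + 1) := by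
  have hc : ∀ j : ℕ+, ∑ k ∈ Finset.Ico j N, g k = g j + ∑ k ∈ Finset.Ico (j + 1) N, g k := by
    intro j
    rcases lt_or_ge j N with hj | hj
    · rw [← Finset.insert_Ico_add_one_left_eq_Ico hj, Finset.sum_insert (by simp)]
    · rw [Finset.Ico_eq_empty_of_le hj,
        Finset.Ico_eq_empty_of_le (hj.trans (PNat.lt_add_right j 1).le), hg j hj]
      simp
  refine ⟨fun j => ∑ k ∈ Finset.Ico j N, g k, ⟨fun j => ?_, N, fun j hj => ?_⟩, hc⟩
  · simp only [hc j]; exact Nat.le_add_left _ _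
  · simp [Finset.Ico_eq_empty_of_le hj]

lemma isPartition_add_count_iff {c : ℕ+ → ℕ} (hc : IsPartition c) (z : List ℕ+) :
    IsPartition (fun i => c i + z.count i) ↔
      HasGapsAtLeast c (fun j => z.count (j + 1) - z.count j) := by
  refine ⟨fun h j => ?_, fun h => ⟨fun j => ?_, ?_⟩⟩
  · have := h.1 j; have := hc.1 j; dsimp only at *; omega
  · have := h j; dsimp only at this ⊢; omega
  · obtain ⟨N₁, hN₁⟩ := hc.2
    obtain ⟨N₂, hN₂⟩ := exists_count_eq_zero z
    exact ⟨max N₁ N₂, fun i hi => by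
      simp [hN₁ i (le_of_max_le_left hi), hN₂ i (le_of_max_le_right hi)]⟩

lemma hasGapsAtLeast_alpha_cons_iff {c : ℕ+ → ℕ} {a : ℕ+} {x : List ℕ+} :
    HasGapsAtLeast c (fun j => alpha j (a :: x)) ↔
      HasGapsAtLeast c (fun j => (a :: x).count (j + 1) - (a :: x).count j) ∧
        HasGapsAtLeast c (fun j => alpha j x) := by
  simp only [HasGapsAtLeast, alpha_cons, ← forall_and]
  exact forall_congr' fun j => by omega

lemma update_add_count (c : ℕ+ → ℕ) (a : ℕ+) (x : List ℕ+) :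
    Function.update (fun i => c i + x.count i) a (c a + x.count a + 1) =
      fun i => c i + (a :: x).count i := by
  funext i
  by_cases hia : i = a
  · subst hia; simp; omega
  · simp [Function.update, hia, Ne.symm hia]

open Classical in
theorem schurWord_eq_ite {c : ℕ+ → ℕ} (hc : IsPartition c) (x : List ℕ+) :
    schurWord x c = if HasGapsAtLeast c (fun j => alpha j x)
      then some (fun i => c i + x.count i) else none := by
  induction x with
  | nil => simpa [alpha_nil, schurWord, HasGapsAtLeast] using hc.1
  | cons a x ih =>
    change (schurWord x c).bind (addBox a) = _
    rw [ih]
    by_cases hx : HasGapsAtLeast c (fun j => alpha j x)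
    · rw [if_pos hx, Option.bind_some, addBox, update_add_count]
      simp only [isPartition_add_count_iff hc, hasGapsAtLeast_alpha_cons_iff, hx, and_true]
    · simp [hx, hasGapsAtLeast_alpha_cons_iff]

lemma count_eq_and_alpha_le_of_forall_schurWord_eq {x y : List ℕ+}
    (H : ∀ c : ℕ+ → ℕ, IsPartition c → schurWord x c = schurWord y c) :
    (∀ i : ℕ+, x.count i = y.count i) ∧ ∀ i : ℕ+, alpha i x ≤ alpha i y := by
  obtain ⟨N, hN⟩ := exists_count_eq_zero y
  have hαN : ∀ j : ℕ+, N ≤ j → alpha j y = 0 := fun j hj =>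
    Nat.eq_zero_of_le_zero <|
      (alpha_le_count_succ j y).trans (hN (j + 1) (hj.trans (PNat.lt_add_right j 1).le)).le
  obtain ⟨c, hc, hgap⟩ := exists_isPartition_gaps (fun j => alpha j y) N hαN
  have hy : HasGapsAtLeast c (fun j => alpha j y) := fun j => (hgap j).ge
  have hxy := H c hc
  rw [schurWord_eq_ite hc, schurWord_eq_ite hc, if_pos hy] at hxy
  split_ifs at hxy with hx
  refine ⟨fun i => ?_, fun i => ?_⟩
  · simpa using congrFun (Option.some.inj hxy) i
  · have := hx i; have := hgap i; dsimp only at *; omega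

theorem stmt1 (x y : List ℕ+) :
    (∀ c : ℕ+ → ℕ, IsPartition c → schurWord x c = schurWord y c) ↔
      ((∀ i : ℕ+, x.count i = y.count i) ∧ (∀ i : ℕ+, alpha i x = alpha i y)) := by
  refine ⟨fun H => ?_, fun ⟨hcount, halpha⟩ c hc => ?_⟩
  · obtain ⟨hcount, hxy⟩ := count_eq_and_alpha_le_of_forall_schurWord_eq H
    have hyx := (count_eq_and_alpha_le_of_forall_schurWord_eq fun c hc => (H c hc).symm).2
    exact ⟨hcount, fun i => (hxy i).antisymm (hyx i)⟩
  · have hα : (fun j => alpha j x) = fun j => alpha j y := funext halpha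
    rw [schurWord_eq_ite hc, schurWord_eq_ite hc, hα]
    simp only [hcount]
end

section
/- If x = x_1⋯x_l and y = y_1⋯y_l are words such that u_x(λ) = u_y(λ) for all partitions λ, and x' = (x_1+1)⋯(x_l+1), y' = (y_1+1)⋯(y_l+1) are obtained by incrementing every letter, then u_{x'}(λ) = u_{y'}(λ) for all partitions λ. -/
/-!
A partition is its first column followed by the partition formed by its other columns, whose
first column is no longer. Under this decomposition `u_{i+1}` acts on the other columns as `u_i`,
followed by the check that the first column is still the longest (`consCol?`). Adding boxes never
shortens a column, so this check commutes with every `u_i`; hence `u_{x'} λ` is `u_x` applied to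
the other columns of `λ` followed by the check, and the hypothesis applies to those columns.
-/

lemma schurWord_cons (a : ℕ+) (x : List ℕ+) (c : ℕ+ → ℕ) :
    schurWord (a :: x) c = (schurWord x c).bind (addBox a) := rfl

lemma PNat.forall_iff_one_and_add_one {p : ℕ+ → Prop} : (∀ i, p i) ↔ p 1 ∧ ∀ i, p (i + 1) :=
  ⟨fun h => ⟨h 1, fun i => h (i + 1)⟩, fun h i => PNat.recOn i h.1 fun i _ => h.2 i⟩

def consCol (m : ℕ) (e : ℕ+ → ℕ) : ℕ+ → ℕ :=
  fun j => PNat.recOn j m fun i _ => e i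

@[simp] lemma consCol_one (m : ℕ) (e : ℕ+ → ℕ) : consCol m e 1 = m :=
  PNat.recOn_one _ _

@[simp] lemma consCol_add_one (m : ℕ) (e : ℕ+ → ℕ) (i : ℕ+) : consCol m e (i + 1) = e i :=
  PNat.recOn_succ _ _ _

lemma consCol_tail (c : ℕ+ → ℕ) : consCol (c 1) (fun i => c (i + 1)) = c := by
  funext j
  cases j using PNat.recOn <;> simp

lemma update_consCol_add_one (m : ℕ) (e : ℕ+ → ℕ) (a : ℕ+) (v : ℕ) :
    Function.update (consCol m e) (a + 1) v = consCol m (Function.update e a v) := by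
  funext j
  cases j using PNat.recOn with
  | one => simp [(PNat.lt_add_left 1 a).ne]
  | succ i _ => simp [Function.update_apply]

lemma isPartition_consCol_iff {m : ℕ} {e : ℕ+ → ℕ} :
    IsPartition (consCol m e) ↔ IsPartition e ∧ e 1 ≤ m := by
  have antitone_iff : (∀ i, consCol m e (i + 1) ≤ consCol m e i) ↔
      e 1 ≤ m ∧ ∀ i, e (i + 1) ≤ e i := by
    rw [PNat.forall_iff_one_and_add_one]
    simp
  have eventually_zero_iff : (∃ N, ∀ i, N ≤ i → consCol m e i = 0) ↔
      ∃ N, ∀ i, N ≤ i → e i = 0 := by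
    constructor
    · rintro ⟨N, hN⟩
      exact ⟨N, fun i hi => by simpa using hN (i + 1) (hi.trans (PNat.lt_add_right i 1).le)⟩
    · rintro ⟨N, hN⟩
      refine ⟨N + 1, PNat.forall_iff_one_and_add_one.2 ⟨fun h => ?_, fun i hi => ?_⟩⟩
      · exact absurd h (PNat.lt_add_left 1 N).not_ge
      · simpa using hN i (le_of_add_le_add_right hi)
  rw [IsPartition, IsPartition, antitone_iff, eventually_zero_iff]
  tauto

def consCol? (m : ℕ) (e : ℕ+ → ℕ) : Option (ℕ+ → ℕ) :=
  if e 1 ≤ m then some (consCol m e) else none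

lemma addBox_add_one_consCol (a : ℕ+) (m : ℕ) (e : ℕ+ → ℕ) :
    addBox (a + 1) (consCol m e) = (addBox a e).bind (consCol? m) := by
  rw [addBox, consCol_add_one, update_consCol_add_one, isPartition_consCol_iff, addBox]
  by_cases hp : IsPartition (Function.update e a (e a + 1)) <;> simp [hp, consCol?]

lemma consCol?_bind_addBox_add_one (a : ℕ+) (m : ℕ) (e : ℕ+ → ℕ) :
    (consCol? m e).bind (addBox (a + 1)) = (addBox a e).bind (consCol? m) := by
  by_cases hm : e 1 ≤ m
  · simp [consCol?, hm, addBox_add_one_consCol]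
  · have : m < Function.update e a (e a + 1) 1 := 
      (not_le.1 hm).trans_le (le_update_self_iff.2 (Nat.le_succ _) 1)
    unfold addBox
    split_ifs <;> simp [consCol?, hm, this.not_ge]

lemma consCol?_bind_schurWord_map_add_one (x : List ℕ+) (m : ℕ) (d : ℕ+ → ℕ) :
    (consCol? m d).bind (schurWord (x.map (· + 1))) = (schurWord x d).bind (consCol? m) := by
  induction x with
  | nil => exact Option.bind_fun_some _
  | cons a t ih =>
    calc (consCol? m d).bind (schurWord ((a :: t).map (· + 1)))
        = ((consCol? m d).bind (schurWord (t.map (· + 1)))).bind (addBox (a + 1)) := by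
          rw [Option.bind_assoc]; rfl
      _ = (schurWord t d).bind fun e => (consCol? m e).bind (addBox (a + 1)) := by
          rw [ih, Option.bind_assoc]
      _ = (schurWord (a :: t) d).bind (consCol? m) := by
          simp only [consCol?_bind_addBox_add_one, schurWord_cons, Option.bind_assoc]

lemma IsPartition.tail {c : ℕ+ → ℕ} (hc : IsPartition c) : IsPartition (fun i => c (i + 1)) :=
  (isPartition_consCol_iff.1 ((consCol_tail c).symm ▸ hc)).1

lemma IsPartition.consCol?_tail {c : ℕ+ → ℕ} (hc : IsPartition c) :
    consCol? (c 1) (fun i => c (i + 1)) = some c := by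
  rw [consCol?, if_pos (hc.1 1), consCol_tail]

theorem stmt4 (x y : List ℕ+)
    (h : ∀ c : ℕ+ → ℕ, IsPartition c → schurWord x c = schurWord y c) :
    ∀ c : ℕ+ → ℕ, IsPartition c →
      schurWord (x.map (· + 1)) c = schurWord (y.map (· + 1)) c := by
  intro c hc
  calc schurWord (x.map (· + 1)) c
      = (consCol? (c 1) fun i => c (i + 1)).bind (schurWord (x.map (· + 1))) := by
        rw [hc.consCol?_tail, Option.bind_some]
    _ = (consCol? (c 1) fun i => c (i + 1)).bind (schurWord (y.map (· + 1))) := by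
        rw [consCol?_bind_schurWord_map_add_one, consCol?_bind_schurWord_map_add_one, h _ hc.tail]
    _ = schurWord (y.map (· + 1)) c := by
        rw [hc.consCol?_tail, Option.bind_some]
end
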